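/- The set of extreme points of the convex set C equals C ∩ 𝒥: a function f ∈ C is an extreme point of C if and only if f belongs to the class 𝒥. -/

import Mathlib

open MeasureTheory Filter Topology Set

/-- The probability space `(Ω, 𝓕, P)` is atomless. -/
def Atomless {Ω : Type*} [MeasurableSpace Ω] (P : Measure Ω) : Prop :=
  ∀ A : Set Ω, MeasurableSet A → 0 < P A →
    ∃ B : Set Ω, MeasurableSet B ∧ B ⊆ A ∧ 0 < P B ∧ P B < P A

/-- The distribution function `F_φ` of `φ`. -/
noncomputable def cdf {Ω : Type*} [MeasurableSpace Ω] (P : Measure Ω) (φ : Ω → ℝ)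
    (x : ℝ) : ℝ :=
  (P {ω | φ ω ≤ x}).toReal

/-- The measure `μ` on `[0,∞)` defined by `μ(A) = E[φ; φ ∈ A]`. -/
noncomputable def muD {Ω : Type*} [MeasurableSpace Ω] (P : Measure Ω) (φ : Ω → ℝ) :
    Measure ℝ :=
  Measure.map φ (P.withDensity fun ω => ENNReal.ofReal (φ ω))

/-- The convex set `C` of all increasing functions `f : [0,∞) → [0,1]` that are
right-continuous at every continuity point of `F_φ` and satisfy `∫ f dμ = v`.
(Functions on `[0,∞)` are modelled as functions on `ℝ` pinned by `f(x) = f(0)` for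
`x < 0`.) -/
def CSet {Ω : Type*} [MeasurableSpace Ω] (P : Measure Ω) (φ : Ω → ℝ) (v : ℝ) :
    Set (ℝ → ℝ) :=
  {f | MonotoneOn f (Ici 0) ∧ (∀ x ∈ Ici (0:ℝ), f x ∈ Icc (0:ℝ) 1) ∧
    (∀ x < (0:ℝ), f x = f 0) ∧
    (∀ x ∈ Ici (0:ℝ), ContinuousAt (cdf P φ) x → ContinuousWithinAt f (Ici x) x) ∧
    ∫ x, f x ∂(muD P φ) = v}

/-- The class `𝒥` of increasing step functions `f : [0,∞) → [0,1]` taking at most one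
value in `(0,1)`: `f = β·1_{J₀} + 1_{J₁}` with `β ∈ (0,1)` and disjoint intervals
`J₀, J₁`, where `J₀` is empty or satisfies `μ(J₀) > 0`, `J₁` is empty or unbounded to the
right, and if both are nonempty, the right endpoint of `J₀` is the left endpoint of
`J₁`. -/
def JSet {Ω : Type*} [MeasurableSpace Ω] (P : Measure Ω) (φ : Ω → ℝ) : Set (ℝ → ℝ) :=
  {f | MonotoneOn f (Ici 0) ∧
    ∃ (β : ℝ) (J0 J1 : Set ℝ), β ∈ Ioo (0:ℝ) 1 ∧
      J0 ⊆ Ici 0 ∧ J1 ⊆ Ici 0 ∧ J0.OrdConnected ∧ J1.OrdConnected ∧ Disjoint J0 J1 ∧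
      (J0 = ∅ ∨ 0 < muD P φ J0) ∧
      (J1 = ∅ ∨ ¬ BddAbove J1) ∧
      (J0.Nonempty → J1.Nonempty → sSup J0 = sInf J1) ∧
      ∀ x ∈ Ici (0:ℝ),
        f x = β * J0.indicator (fun _ => (1:ℝ)) x + J1.indicator (fun _ => (1:ℝ)) x}

/-!
If `f = β 1_{J₀} + 1_{J₁}` is a proper convex combination of `f₁, f₂ ∈ C`, then `f₁` and `f₂`
vanish where `f` does and equal `1` where `f` does, and, being increasing, are constant on `J₀`;
the constraint `∫ f dμ = v` with `μ J₀ > 0` forces both constants to be `β`.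

Conversely, let `k` be Lipschitz with `k 0 = k 1 = 0` and `∫ k ∘ f dμ = 0`. For small `σ` the map
`u ↦ u ± σ k u` is increasing and fixes `0` and `1`, so `f ± σ k ∘ f ∈ C`, and `f` is their
midpoint; at an extreme point this forces `k ∘ f = 0`. Applied to the tent functions
`tent c u = min u c - c u`, this rules out two distinct values of `f` in `(0, 1)`, and a single
such value taken on a `μ`-null set.
-/

theorem csSup_eq_csInf_of_ordConnected_union {α : Type*} [ConditionallyCompleteLinearOrder α]
    [DenselyOrdered α] {s t : Set α} (hs : s.Nonempty) (ht : t.Nonempty)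
    (hst : ∀ x ∈ s, ∀ y ∈ t, x ≤ y) (hc : (s ∪ t).OrdConnected) : sSup s = sInf t := by
  obtain ⟨x, hx⟩ := hs
  obtain ⟨y, hy⟩ := ht
  have hs_bdd : BddAbove s := ⟨y, fun x' hx' => hst x' hx' y hy⟩
  have ht_bdd : BddBelow t := ⟨x, fun y' hy' => hst x hx y' hy'⟩
  refine le_antisymm (csSup_le ⟨x, hx⟩ fun x' hx' => le_csInf ⟨y, hy⟩ (hst x' hx')) ?_
  by_contra! hlt
  obtain ⟨z, hsz, hzt⟩ := exists_between hlt
  have hz : z ∈ s ∪ t :=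
    hc.out (mem_union_left t hx) (mem_union_right s hy)
      ⟨(le_csSup hs_bdd hx).trans hsz.le, hzt.le.trans (csInf_le ht_bdd hy)⟩
  rcases hz with hz | hz
  · exact hsz.not_ge (le_csSup hs_bdd hz)
  · exact hzt.not_ge (csInf_le ht_bdd hz)

theorem eq_and_eq_of_convex_comb_eq {a b a' b' t : ℝ} (ht : t ∈ Ioo (0:ℝ) 1) (ha : a ≤ a')
    (hb : b ≤ b') (h : t * a + (1 - t) * b = t * a' + (1 - t) * b') : a = a' ∧ b = b' := by
  obtain ⟨ht0, ht1⟩ := ht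
  constructor <;> nlinarith [mul_le_mul_of_nonneg_left ha ht0.le,
    mul_le_mul_of_nonneg_left hb (sub_nonneg.2 ht1.le)]

theorem monotone_add_mul_of_lipschitzWith {k : ℝ → ℝ} {K : NNReal} (hk : LipschitzWith K k)
    {σ : ℝ} (hσ : |σ| * K ≤ 1) : Monotone fun u => u + σ * k u := by
  intro u u' huu'
  have hk' : |k u - k u'| ≤ K * (u' - u) := by
    simpa [Real.dist_eq, abs_sub_comm u u', abs_of_nonneg (sub_nonneg.2 huu')]
      using hk.dist_le_mul u u'
  have : σ * (k u - k u') ≤ u' - u :=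
    calc σ * (k u - k u') ≤ |σ| * |k u - k u'| := by rw [← abs_mul]; exact le_abs_self _
      _ ≤ |σ| * (K * (u' - u)) := by gcongr
      _ = (|σ| * K) * (u' - u) := by ring
      _ ≤ 1 * (u' - u) := by gcongr
      _ = u' - u := one_mul _
  dsimp only
  linarith

theorem eq_zero_of_ae_eq_indicator_const {α : Type*} [MeasurableSpace α] {μ : Measure α}
    [IsFiniteMeasure μ] {g : α → ℝ} {s : Set α} (hs : MeasurableSet s) (hμs : μ s ≠ 0) {c : ℝ}
    (hg : g =ᵐ[μ] s.indicator fun _ => c) (hint : ∫ x, g x ∂μ = 0) : c = 0 := by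
  rw [integral_congr_ae hg, integral_indicator_const _ hs, smul_eq_mul] at hint
  exact (mul_eq_zero.1 hint).resolve_left (ENNReal.toReal_pos hμs (measure_ne_top μ s)).ne'

def tent (c u : ℝ) : ℝ := min u c - c * u

theorem tent_zero {c : ℝ} (hc : 0 ≤ c) : tent c 0 = 0 := by simp [tent, hc]

theorem tent_one {c : ℝ} (hc : c ≤ 1) : tent c 1 = 0 := by simp [tent, hc]

theorem tent_of_le {c u : ℝ} (h : u ≤ c) : tent c u = u * (1 - c) := by
  rw [tent, min_eq_left h]; ring

theorem tent_of_ge {c u : ℝ} (h : c ≤ u) : tent c u = c * (1 - u) := by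
  rw [tent, min_eq_right h]; ring

theorem lipschitzWith_tent (c : ℝ) : LipschitzWith (1 + ‖c‖₊) (tent c) :=
  (LipschitzWith.id.min_const c).sub (lipschitzWith_smul c)

theorem tent_eq_zero_of_notMem_Ioo {c u : ℝ} (hc : c ∈ Icc (0:ℝ) 1) (hu : u ∈ Icc (0:ℝ) 1)
    (hu' : u ∉ Ioo (0:ℝ) 1) : tent c u = 0 := by
  rcases hu.1.eq_or_lt with h | h
  · rw [← h, tent_zero hc.1]
  · rw [(hu.2.lt_or_eq.resolve_left fun h' => hu' ⟨h, h'⟩), tent_one hc.2]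

section muD

variable {Ω : Type*} [MeasurableSpace Ω] {P : Measure Ω} {φ : Ω → ℝ}

theorem isFiniteMeasure_muD (hφint : Integrable φ P) : IsFiniteMeasure (muD P φ) := by
  have := isFiniteMeasure_withDensity_ofReal hφint.2
  unfold muD
  infer_instance

theorem ae_nonneg_muD (hφm : Measurable φ) : ∀ᵐ x ∂muD P φ, 0 ≤ x := by
  have hneg : muD P φ (Iio 0) = 0 := by
    rw [muD, Measure.map_apply hφm measurableSet_Iio,
      withDensity_apply _ (hφm measurableSet_Iio)]
    exact setLIntegral_eq_zero (hφm measurableSet_Iio) fun ω hω =>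
      ENNReal.ofReal_of_nonpos (le_of_lt hω)
  rw [ae_iff]
  simp_rw [not_le]
  exact hneg

end muD

section CSet

variable {Ω : Type*} [MeasurableSpace Ω] {P : Measure Ω} {φ : Ω → ℝ} {v : ℝ} {f : ℝ → ℝ}

theorem monotone_of_mem_CSet (hf : f ∈ CSet P φ v) : Monotone f := by
  obtain ⟨hmono, -, hpin, -⟩ := hf
  intro x y hxy
  rcases lt_or_ge x 0 with hx | hx
  · rcases lt_or_ge y 0 with hy | hy
    · rw [hpin x hx, hpin y hy]
    · rw [hpin x hx]; exact hmono self_mem_Ici hy hy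
  · exact hmono hx (hx.trans hxy) hxy

theorem mem_Icc_of_mem_CSet (hf : f ∈ CSet P φ v) (x : ℝ) : f x ∈ Icc (0:ℝ) 1 := by
  rcases lt_or_ge x 0 with hx | hx
  · rw [hf.2.2.1 x hx]; exact hf.2.1 0 self_mem_Ici
  · exact hf.2.1 x hx

theorem integrable_of_mem_CSet (hφint : Integrable φ P) (hf : f ∈ CSet P φ v) :
    Integrable f (muD P φ) := by
  have := isFiniteMeasure_muD hφint
  refine .of_bound (monotone_of_mem_CSet hf).measurable.aestronglyMeasurable 1
    (ae_of_all _ fun x => ?_)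
  have := mem_Icc_of_mem_CSet hf x
  rw [Real.norm_eq_abs, abs_le]
  constructor <;> linarith [this.1, this.2]

theorem integrable_comp_of_mem_CSet (hφint : Integrable φ P) (hf : f ∈ CSet P φ v)
    {k : ℝ → ℝ} {K : NNReal} (hk : LipschitzWith K k) (hk0 : k 0 = 0) :
    Integrable (fun x => k (f x)) (muD P φ) :=
  have := isFiniteMeasure_muD hφint
  (hk.comp_memLp hk0 (memLp_one_iff_integrable.2 (integrable_of_mem_CSet hφint hf))).integrable
    le_rfl

theorem add_mul_comp_mem_CSet (hφint : Integrable φ P) (hf : f ∈ CSet P φ v) {k : ℝ → ℝ}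
    {K : NNReal} (hk : LipschitzWith K k) (hk0 : k 0 = 0) (hk1 : k 1 = 0)
    (hint : ∫ x, k (f x) ∂muD P φ = 0) {σ : ℝ} (hσ : |σ| * K ≤ 1) :
    (fun x => f x + σ * k (f x)) ∈ CSet P φ v := by
  have hfi := integrable_of_mem_CSet hφint hf
  have hki := integrable_comp_of_mem_CSet hφint hf hk hk0
  obtain ⟨hmono, hrange, hpin, hcont, hintf⟩ := hf
  have hh : Monotone fun u => u + σ * k u := monotone_add_mul_of_lipschitzWith hk hσ
  refine ⟨hh.comp_monotoneOn hmono, fun x hx => ?_, fun x hx => by simp only [hpin x hx],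
    fun x hx hF => ?_, ?_⟩
  · constructor
    · simpa [hk0] using hh (hrange x hx).1
    · simpa [hk1] using hh (hrange x hx).2
  · exact (continuous_id.add (continuous_const.mul hk.continuous)).continuousAt
      |>.comp_continuousWithinAt (hcont x hx hF)
  · rw [integral_add hfi (hki.const_mul σ), integral_const_mul, hint, hintf]
    ring

theorem eq_of_eqOn_Ici_of_mem_CSet {f₁ f₂ : ℝ → ℝ} (hf₁ : f₁ ∈ CSet P φ v)
    (hf₂ : f₂ ∈ CSet P φ v) (h : EqOn f₁ f₂ (Ici 0)) : f₁ = f₂ := by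
  funext x
  rcases lt_or_ge x 0 with hx | hx
  · rw [hf₁.2.2.1 x hx, hf₂.2.2.1 x hx]
    exact h self_mem_Ici
  · exact h hx

theorem eq_zero_of_sub_eq_indicator (hφm : Measurable φ) (hφint : Integrable φ P)
    {f₁ f₂ : ℝ → ℝ} (hf₁ : f₁ ∈ CSet P φ v) (hf₂ : f₂ ∈ CSet P φ v) {s : Set ℝ}
    (hs : MeasurableSet s) (hμs : 0 < muD P φ s) {c : ℝ}
    (h : ∀ x ∈ Ici (0:ℝ), f₁ x - f₂ x = s.indicator (fun _ => c) x) : c = 0 := by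
  have := isFiniteMeasure_muD hφint
  refine eq_zero_of_ae_eq_indicator_const hs hμs.ne' (g := fun x => f₁ x - f₂ x) ?_ ?_
  · filter_upwards [ae_nonneg_muD hφm] with x hx using h x hx
  · rw [integral_sub (integrable_of_mem_CSet hφint hf₁) (integrable_of_mem_CSet hφint hf₂),
      hf₁.2.2.2.2, hf₂.2.2.2.2, sub_self]

end CSet

def IsExtremeIn (C : Set (ℝ → ℝ)) (f : ℝ → ℝ) : Prop :=
  ∀ f₁ ∈ C, ∀ f₂ ∈ C, ∀ t ∈ Ioo (0:ℝ) 1, f = (fun x => t * f₁ x + (1 - t) * f₂ x) → f₁ = f₂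

namespace IsExtremeIn

variable {Ω : Type*} [MeasurableSpace Ω] {P : Measure Ω} {φ : Ω → ℝ} {v : ℝ} {f : ℝ → ℝ}

theorem comp_eq_zero (hext : IsExtremeIn (CSet P φ v) f) (hφint : Integrable φ P)
    (hf : f ∈ CSet P φ v) {k : ℝ → ℝ} {K : NNReal} (hk : LipschitzWith K k) (hk0 : k 0 = 0)
    (hk1 : k 1 = 0) (hint : ∫ x, k (f x) ∂muD P φ = 0) (x : ℝ) : k (f x) = 0 := by
  set σ : ℝ := 1 / (K + 1)
  have hσ0 : 0 < σ := by positivity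
  have hσ : |σ| * K ≤ 1 := by
    rw [abs_of_pos hσ0, div_mul_eq_mul_div, one_mul, div_le_one (by positivity)]
    linarith
  have hsplit := hext _ (add_mul_comp_mem_CSet hφint hf hk hk0 hk1 hint hσ)
    _ (add_mul_comp_mem_CSet hφint hf hk hk0 hk1 hint (σ := -σ) (by rwa [abs_neg]))
    (1 / 2) ⟨by norm_num, by norm_num⟩ (funext fun x => by ring)
  have hx := congrFun hsplit x
  nlinarith

theorem eq_of_mem_Ioo (hext : IsExtremeIn (CSet P φ v) f) (hφint : Integrable φ P)
    (hf : f ∈ CSet P φ v) {x₁ x₂ : ℝ} (h₁ : f x₁ ∈ Ioo (0:ℝ) 1) (h₂ : f x₂ ∈ Ioo (0:ℝ) 1) :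
    f x₁ = f x₂ := by
  wlog hlt : f x₁ < f x₂ generalizing x₁ x₂
  · rcases (not_lt.1 hlt).lt_or_eq with h | h
    · exact (this h₂ h₁ h).symm
    · exact h.symm
  set c₁ := f x₁
  set c₂ := f x₂
  set I₁ := ∫ x, tent c₁ (f x) ∂muD P φ
  set I₂ := ∫ x, tent c₂ (f x) ∂muD P φ
  -- `I₂ • tent c₁ - I₁ • tent c₂` has integral zero; as the two tents are linearly independent
  -- on `{c₁, c₂}`, it can only vanish there if `I₁ = I₂ = 0`.
  have hcomb := comp_eq_zero hext hφint hf
    (((lipschitzWith_smul I₂).comp (lipschitzWith_tent c₁)).sub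
      ((lipschitzWith_smul I₁).comp (lipschitzWith_tent c₂)))
    (k := fun u => I₂ * tent c₁ u - I₁ * tent c₂ u)
    (by simp [tent_zero h₁.1.le, tent_zero h₂.1.le])
    (by simp [tent_one h₁.2.le, tent_one h₂.2.le])
    (by
      rw [integral_sub ((integrable_comp_of_mem_CSet hφint hf (lipschitzWith_tent c₁)
        (tent_zero h₁.1.le)).const_mul _) ((integrable_comp_of_mem_CSet hφint hf
        (lipschitzWith_tent c₂) (tent_zero h₂.1.le)).const_mul _), integral_const_mul,
        integral_const_mul]
      ring)
  have e₁ := hcomb x₁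
  have e₂ := hcomb x₂
  rw [tent_of_le le_rfl, tent_of_le hlt.le] at e₁
  rw [tent_of_ge hlt.le, tent_of_ge le_rfl] at e₂
  have e₁' : I₂ * (1 - c₁) - I₁ * (1 - c₂) = 0 :=
    (mul_eq_zero.1 (by linear_combination e₁)).resolve_left h₁.1.ne'
  have e₂' : I₂ * c₁ - I₁ * c₂ = 0 :=
    (mul_eq_zero.1 (by linear_combination e₂)).resolve_left (sub_pos.2 h₂.2).ne'
  have hI₁ : I₁ = 0 :=
    (mul_eq_zero.1 (by linear_combination c₁ * e₁' + (c₁ - 1) * e₂')).resolve_right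
      (sub_pos.2 hlt).ne'
  have := comp_eq_zero hext hφint hf (lipschitzWith_tent c₁) (tent_zero h₁.1.le)
    (tent_one h₁.2.le) hI₁ x₁
  rw [tent_of_le le_rfl] at this
  nlinarith [h₁.1, h₁.2]

theorem measure_preimage_Ioo_pos (hext : IsExtremeIn (CSet P φ v) f) (hφm : Measurable φ)
    (hφint : Integrable φ P) (hf : f ∈ CSet P φ v) (hJ : (Ici 0 ∩ f ⁻¹' Ioo 0 1).Nonempty) :
    0 < muD P φ (Ici 0 ∩ f ⁻¹' Ioo 0 1) := by
  obtain ⟨x₀, -, hx₀⟩ := hJ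
  by_contra! hnull
  have hnull' := measure_eq_zero_iff_ae_notMem.1 (nonpos_iff_eq_zero.1 hnull)
  have hβ : f x₀ ∈ Icc (0:ℝ) 1 := Ioo_subset_Icc_self hx₀
  have hint : ∫ x, tent (f x₀) (f x) ∂muD P φ = 0 := by
    refine integral_eq_zero_of_ae ?_
    filter_upwards [ae_nonneg_muD hφm, hnull'] with x hx hxJ
    exact tent_eq_zero_of_notMem_Ioo hβ (mem_Icc_of_mem_CSet hf x) fun h => hxJ ⟨hx, h⟩
  have := comp_eq_zero hext hφint hf (lipschitzWith_tent (f x₀)) (tent_zero hβ.1)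
    (tent_one hβ.2) hint x₀
  rw [tent_of_le le_rfl] at this
  nlinarith [hx₀.1, hx₀.2]

end IsExtremeIn

section JSet

variable {Ω : Type*} [MeasurableSpace Ω] {P : Measure Ω} {φ : Ω → ℝ} {v : ℝ} {f : ℝ → ℝ}

theorem mem_JSet_of_monotone (hmono : Monotone f) (hrange : ∀ x, f x ∈ Icc (0:ℝ) 1)
    (hβ : ∀ x ∈ Ici 0 ∩ f ⁻¹' Ioo 0 1, ∀ y ∈ Ici 0 ∩ f ⁻¹' Ioo 0 1, f x = f y)
    (hpos : (Ici 0 ∩ f ⁻¹' Ioo 0 1).Nonempty → 0 < muD P φ (Ici 0 ∩ f ⁻¹' Ioo 0 1)) :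
    f ∈ JSet P φ := by
  set J₀ := Ici 0 ∩ f ⁻¹' Ioo 0 1
  set J₁ := Ici 0 ∩ f ⁻¹' {1}
  obtain ⟨β, hβ01, hJ₀⟩ : ∃ β ∈ Ioo (0:ℝ) 1, ∀ x ∈ J₀, f x = β := by
    rcases J₀.eq_empty_or_nonempty with h | ⟨x₀, hx₀⟩
    · exact ⟨1 / 2, ⟨by norm_num, by norm_num⟩, by simp [h]⟩
    · exact ⟨f x₀, hx₀.2, fun x hx => hβ x hx x₀ hx₀⟩
  have hdisj : Disjoint J₀ J₁ := by
    rw [disjoint_left]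
    rintro x ⟨-, hx₀⟩ ⟨-, hx₁⟩
    exact hx₀.2.ne hx₁
  have hJ₁_up {x y : ℝ} (hx : x ∈ J₁) (hxy : x ≤ y) : y ∈ J₁ :=
    ⟨hx.1.trans hxy, le_antisymm (hrange y).2 (hx.2.symm.trans_le (hmono hxy))⟩
  refine ⟨hmono.monotoneOn _, β, J₀, J₁, hβ01, inter_subset_left, inter_subset_left,
    ordConnected_Ici.inter (ordConnected_Ioo.preimage_mono hmono),
    ordConnected_Ici.inter (ordConnected_singleton.preimage_mono hmono), hdisj,
    J₀.eq_empty_or_nonempty.imp_right hpos, ?_, fun h₀ h₁ => ?_, fun x hx => ?_⟩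
  · refine J₁.eq_empty_or_nonempty.imp_right fun ⟨y, hy⟩ hbdd => ?_
    exact not_bddAbove_Ici y (hbdd.mono fun z hz => hJ₁_up hy hz)
  · refine csSup_eq_csInf_of_ordConnected_union h₀ h₁
      (fun x hx y hy => (hmono.reflect_lt (hx.2.2.trans_eq hy.2.symm)).le) ?_
    rw [← inter_union_distrib_left, ← preimage_union, Ioo_union_right zero_lt_one]
    exact ordConnected_Ici.inter (ordConnected_Ioc.preimage_mono hmono)
  · by_cases h₁ : x ∈ J₁
    · rw [indicator_of_notMem (disjoint_right.1 hdisj h₁), indicator_of_mem h₁, mul_zero, zero_add]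
      exact h₁.2
    by_cases h₀ : x ∈ J₀
    · simp [indicator_of_mem h₀, indicator_of_notMem h₁, hJ₀ x h₀]
    · simp only [indicator_of_notMem h₀, indicator_of_notMem h₁, mul_zero, add_zero]
      exact le_antisymm (not_lt.1 fun h => h₀ ⟨hx, h, (hrange x).2.lt_of_ne fun h' => h₁ ⟨hx, h'⟩⟩)
        (hrange x).1

theorem isExtremeIn_of_mem_JSet (hφm : Measurable φ) (hφint : Integrable φ P)
    (hf : f ∈ JSet P φ) : IsExtremeIn (CSet P φ v) f := by
  intro f₁ hf₁ f₂ hf₂ t ht hcomb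
  obtain ⟨-, β, J₀, J₁, -, hJ₀, -, hJ₀c, -, hdisj, hμ, -, -, hfJ⟩ := hf
  have hcomb' (x : ℝ) : t * f₁ x + (1 - t) * f₂ x = f x := (congrFun hcomb x).symm
  have hr₁ := mem_Icc_of_mem_CSet hf₁
  have hr₂ := mem_Icc_of_mem_CSet hf₂
  have hoff : ∀ x ∈ Ici (0:ℝ), x ∉ J₀ → f₁ x = f₂ x := by
    intro x hx hx₀
    by_cases hx₁ : x ∈ J₁
    · have := eq_and_eq_of_convex_comb_eq ht (hr₁ x).2 (hr₂ x).2
        (by rw [hcomb', hfJ x hx]; simp [hx₀, hx₁])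
      rw [this.1, this.2]
    · have := eq_and_eq_of_convex_comb_eq ht (hr₁ x).1 (hr₂ x).1
        (by rw [hcomb', hfJ x hx]; simp [hx₀, hx₁])
      rw [← this.1, ← this.2]
  have hJ₀β : ∀ x ∈ J₀, f x = β := fun x hx => by
    simp [hfJ x (hJ₀ hx), hx, disjoint_left.1 hdisj hx]
  have hon : ∀ x ∈ J₀, ∀ y ∈ J₀, f₁ x - f₂ x = f₁ y - f₂ y := by
    have hle (x) (hx : x ∈ J₀) (y) (hy : y ∈ J₀) (hxy : x ≤ y) : f₁ x - f₂ x = f₁ y - f₂ y := by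
      obtain ⟨h₁, h₂⟩ := eq_and_eq_of_convex_comb_eq ht (hf₁.1 (hJ₀ hx) (hJ₀ hy) hxy)
        (hf₂.1 (hJ₀ hx) (hJ₀ hy) hxy) (by rw [hcomb', hcomb', hJ₀β x hx, hJ₀β y hy])
      rw [h₁, h₂]
    intro x hx y hy
    rcases le_total x y with h | h
    exacts [hle x hx y hy h, (hle y hy x hx h).symm]
  have hJ₀eq : ∀ x₀ ∈ J₀, f₁ x₀ = f₂ x₀ := by
    intro x₀ hx₀
    refine sub_eq_zero.1 (eq_zero_of_sub_eq_indicator hφm hφint hf₁ hf₂ hJ₀c.measurableSet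
      (hμ.resolve_left (nonempty_iff_ne_empty.1 ⟨x₀, hx₀⟩)) fun x hx => ?_)
    by_cases hx₀' : x ∈ J₀
    · rw [indicator_of_mem hx₀', hon x hx₀' x₀ hx₀]
    · rw [indicator_of_notMem hx₀', hoff x hx hx₀', sub_self]
  exact eq_of_eqOn_Ici_of_mem_CSet hf₁ hf₂ fun x hx => (em (x ∈ J₀)).elim (hJ₀eq x) (hoff x hx)

end JSet

theorem extreme_points_of_C_general
    {Ω : Type*} [MeasurableSpace Ω] (P : Measure Ω)
    (φ : Ω → ℝ) (hφm : Measurable φ) (hφint : Integrable φ P)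
    (v : ℝ) :
    {f ∈ CSet P φ v | ∀ f₁ ∈ CSet P φ v, ∀ f₂ ∈ CSet P φ v, ∀ t ∈ Ioo (0:ℝ) 1,
        f = (fun x => t * f₁ x + (1 - t) * f₂ x) → f₁ = f₂}
      = CSet P φ v ∩ JSet P φ := by
  ext f
  refine ⟨fun ⟨hf, hext⟩ => ⟨hf, ?_⟩, fun ⟨hf, hfJ⟩ => ⟨hf, isExtremeIn_of_mem_JSet hφm hφint hfJ⟩⟩
  exact mem_JSet_of_monotone (monotone_of_mem_CSet hf) (mem_Icc_of_mem_CSet hf)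
    (fun x hx y hy => IsExtremeIn.eq_of_mem_Ioo hext hφint hf hx.2 hy.2)
    (IsExtremeIn.measure_preimage_Ioo_pos hext hφm hφint hf)

/-- Lemma 5.1: the set of extreme points of `C` is exactly `C ∩ 𝒥`:
`f ∈ C` cannot be written as a nontrivial convex combination `f = t f₁ + (1−t) f₂` of two
distinct elements of `C` if and only if `f ∈ 𝒥`. -/
theorem extreme_points_of_C
    {Ω : Type*} [MeasurableSpace Ω] (P : Measure Ω) [IsProbabilityMeasure P]
    (hP : Atomless P)
    (φ : Ω → ℝ) (hφm : Measurable φ) (hφint : Integrable φ P)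
    (hφpos : ∀ᵐ ω ∂P, 0 < φ ω) (hφ1 : ∫ ω, φ ω ∂P = 1)
    (v : ℝ) (hv : v ∈ Icc (0:ℝ) 1) :
    {f ∈ CSet P φ v | ∀ f₁ ∈ CSet P φ v, ∀ f₂ ∈ CSet P φ v, ∀ t ∈ Ioo (0:ℝ) 1,
        f = (fun x => t * f₁ x + (1 - t) * f₂ x) → f₁ = f₂}
      = CSet P φ v ∩ JSet P φ :=
  extreme_points_of_C_general P φ hφm hφint v
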